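/- arXiv:1003.4447 — 9 statements merged into one kernel-verified Lean document; each statement's English description precedes it below -/
import Mathlib

section
/- Let G be a finite simple graph and let π = (W_1, …, W_t) be a clique vertex-partition of G. Then every maximal independent set of the clique-whiskered graph G^π has cardinality exactly t; in particular, the independence complex Ind(G^π) is pure of dimension t − 1. -/
/-- A finset of vertices is an independent set of the graph `G`. -/
def IsIndep {V : Type*} (G : SimpleGraph V) (s : Finset V) : Prop :=
  ∀ u ∈ s, ∀ v ∈ s, ¬ G.Adj u v

/-- A clique vertex-partition of `G`: a family of `t` pairwise disjoint (possibly empty)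
cliques of `G` whose union is the whole vertex set. -/
structure CliquePartition {V : Type*} (G : SimpleGraph V) (t : ℕ) where
  part : Fin t → Finset V
  disj : ∀ i j, i ≠ j → Disjoint (part i) (part j)
  cover : ∀ v, ∃ i, v ∈ part i
  clique : ∀ i, G.IsClique (part i : Set V)

/-- The clique-whiskered graph `G^π`: to each clique `W_i` of the partition a new vertex
`w_i` (encoded as `Sum.inr i`) is attached, joined to every vertex of `W_i`. -/
def whisker {V : Type*} {t : ℕ} (G : SimpleGraph V) (π : CliquePartition G t) :
    SimpleGraph (V ⊕ Fin t) :=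
  SimpleGraph.fromRel fun a b =>
    match a, b with
    | Sum.inl u, Sum.inl v => G.Adj u v
    | Sum.inl v, Sum.inr i => v ∈ π.part i
    | _, _ => False

/-!
Send each vertex of `G^π` to the index of its block: `v ∈ W_i` and the whisker `w_i` both go
to `i`. Each fibre `W_i ∪ {w_i}` is a clique of `G^π`, so an independent set meets every fibre
at most once; and a maximal one meets every fibre, since otherwise `w_i`, whose neighbours all
lie in `W_i`, could be added. Hence the block map is a bijection from a maximal independent
set onto `Fin t`.
-/

theorem IsIndep.insert {V : Type*} [DecidableEq V] {G : SimpleGraph V} {s : Finset V} {x : V}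
    (hs : IsIndep G s) (hx : ∀ y ∈ s, ¬ G.Adj x y) : IsIndep G (insert x s) := by
  intro u hu v hv
  rcases Finset.mem_insert.1 hu with rfl | hus <;> rcases Finset.mem_insert.1 hv with rfl | hvs
  · exact G.irrefl
  · exact hx v hvs
  · exact fun h => hx u hus h.symm
  · exact hs u hus v hvs

namespace CliquePartition

variable {V : Type*} {G : SimpleGraph V} {t : ℕ} (π : CliquePartition G t)

noncomputable def block (v : V) : Fin t :=
  Classical.choose (π.cover v)

theorem mem_part_block (v : V) : v ∈ π.part (π.block v) :=
  Classical.choose_spec (π.cover v)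

theorem block_eq_of_mem {v : V} {i : Fin t} (hv : v ∈ π.part i) : π.block v = i := by
  by_contra hne
  exact Finset.disjoint_left.1 (π.disj _ _ hne) (π.mem_part_block v) hv

theorem adj_of_block_eq {u v : V} (huv : u ≠ v) (h : π.block u = π.block v) : G.Adj u v :=
  π.clique (π.block v) (h ▸ π.mem_part_block u) (π.mem_part_block v) huv

end CliquePartition

section Whisker

variable {V : Type*} {G : SimpleGraph V} {t : ℕ} (π : CliquePartition G t)

theorem whisker_adj_inl_inl {u v : V} :
    (whisker G π).Adj (Sum.inl u) (Sum.inl v) ↔ G.Adj u v := by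
  simp only [whisker, SimpleGraph.fromRel_adj, ne_eq, Sum.inl.injEq]
  exact ⟨fun ⟨_, h⟩ => h.elim id G.adj_symm, fun h => ⟨G.ne_of_adj h, Or.inl h⟩⟩

theorem whisker_adj_inl_inr {v : V} {i : Fin t} :
    (whisker G π).Adj (Sum.inl v) (Sum.inr i) ↔ v ∈ π.part i := by
  simp [whisker]

theorem whisker_not_adj_inr_inr (i j : Fin t) : ¬ (whisker G π).Adj (Sum.inr i) (Sum.inr j) := by
  simp [whisker]

noncomputable def whiskerBlock : V ⊕ Fin t → Fin t :=
  Sum.elim π.block id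

theorem whiskerBlock_eq_of_adj_inr {i : Fin t} {a : V ⊕ Fin t}
    (h : (whisker G π).Adj (Sum.inr i) a) : whiskerBlock π a = i := by
  rcases a with v | j
  · exact π.block_eq_of_mem ((whisker_adj_inl_inr π).1 h.symm)
  · exact (whisker_not_adj_inr_inr π i j h).elim

theorem whisker_adj_of_whiskerBlock_eq {a b : V ⊕ Fin t} (hab : a ≠ b)
    (h : whiskerBlock π a = whiskerBlock π b) : (whisker G π).Adj a b := by
  rcases a with u | i <;> rcases b with v | j <;> simp only [whiskerBlock, Sum.elim_inl,
    Sum.elim_inr, id] at h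
  · exact (whisker_adj_inl_inl π).2 (π.adj_of_block_eq (fun huv => hab (huv ▸ rfl)) h)
  · exact (whisker_adj_inl_inr π).2 (h ▸ π.mem_part_block u)
  · exact ((whisker_adj_inl_inr π).2 (h ▸ π.mem_part_block v)).symm
  · exact (hab (h ▸ rfl)).elim

theorem IsIndep.injOn_whiskerBlock {s : Finset (V ⊕ Fin t)} (hs : IsIndep (whisker G π) s) :
    Set.InjOn (whiskerBlock π) s := by
  intro a ha b hb h
  by_contra hab
  exact hs a ha b hb (whisker_adj_of_whiskerBlock_eq π hab h)

theorem surjOn_whiskerBlock_of_maximal {s : Finset (V ⊕ Fin t)} (hs : IsIndep (whisker G π) s)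
    (hmax : ∀ s', IsIndep (whisker G π) s' → s ⊆ s' → s = s') :
    Set.SurjOn (whiskerBlock π) s Set.univ := by
  classical
  intro i _
  by_contra! hi
  have hins : IsIndep (whisker G π) (insert (Sum.inr i) s) :=
    hs.insert fun a ha hadj => hi ⟨a, ha, whiskerBlock_eq_of_adj_inr π hadj⟩
  have hmem : Sum.inr i ∈ s := by
    rw [hmax _ hins (Finset.subset_insert _ _)]
    exact Finset.mem_insert_self _ _
  exact hi ⟨_, hmem, rfl⟩

end Whisker

theorem maximal_indep_card_of_whisker_general {V : Type*} (G : SimpleGraph V) {t : ℕ}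
    (π : CliquePartition G t) (s : Finset (V ⊕ Fin t))
    (hs : IsIndep (whisker G π) s)
    (hmax : ∀ s', IsIndep (whisker G π) s' → s ⊆ s' → s = s') :
    s.card = t := by
  calc s.card = (Finset.univ : Finset (Fin t)).card :=
        Finset.card_nbij (whiskerBlock π) (fun _ _ => Finset.mem_univ _)
          (hs.injOn_whiskerBlock π) (by simpa using surjOn_whiskerBlock_of_maximal π hs hmax)
    _ = t := Finset.card_fin t

/-- Every maximal independent set of the clique-whiskered graph `G^π` has cardinality
exactly `t`; in particular `Ind(G^π)` is pure of dimension `t - 1`. -/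
theorem maximal_indep_card_of_whisker {V : Type*} [Fintype V] (G : SimpleGraph V) {t : ℕ}
    (π : CliquePartition G t) (s : Finset (V ⊕ Fin t))
    (hs : IsIndep (whisker G π) s)
    (hmax : ∀ s', IsIndep (whisker G π) s' → s ⊆ s' → s = s') :
    s.card = t :=
  maximal_indep_card_of_whisker_general G π s hs hmax
end

section
/- Let G be a bipartite graph without isolated vertices that admits a pure order. If some pure order of G has a cross, then every pure order of G has a cross. -/
/-- A pure order of a bipartite graph `G` (without isolated vertices): enumerations
`x_1, …, x_n` and `y_1, …, y_n` of the two parts of a bipartition of the vertex set such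
that every `x_i y_i` is an edge, and whenever `i, j, k` are distinct and `x_i y_j` and
`x_j y_k` are edges, so is `x_i y_k`. -/
structure PureOrder {V : Type*} (G : SimpleGraph V) (n : ℕ) where
  x : Fin n → V
  y : Fin n → V
  inj : Function.Injective (Sum.elim x y)
  cover : ∀ v : V, (∃ i, v = x i) ∨ (∃ i, v = y i)
  xIndep : ∀ i j, ¬ G.Adj (x i) (x j)
  yIndep : ∀ i j, ¬ G.Adj (y i) (y j)
  matching : ∀ i, G.Adj (x i) (y i)
  pureCond : ∀ i j k, i ≠ j → j ≠ k → i ≠ k →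
    G.Adj (x i) (y j) → G.Adj (x j) (y k) → G.Adj (x i) (y k)

/-- A pure order has a cross if `x_i y_j` and `x_j y_i` are both edges for some `i ≠ j`. -/
def PureOrder.HasCross {V : Type*} {G : SimpleGraph V} {n : ℕ} (P : PureOrder G n) : Prop :=
  ∃ i j, i ≠ j ∧ G.Adj (P.x i) (P.y j) ∧ G.Adj (P.x j) (P.y i)

/-!
If `Q` is cross-free, then `a ⪯ b :↔ x_a y_b ∈ E(G)` is a partial order on the indices of `Q`:
reflexive by the matching, transitive by purity and antisymmetric by cross-freeness. The
matching of any other pure order `P` sends each `x_a` to some `y_{σ a}`, with `σ` injective and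
`a ⪯ σ a`; following the cycle of `σ` through `a` gives `σ a ⪯ a`, so `σ = id`. Hence `P` and `Q`
have the same matching edges, and a cross is a configuration of two matching edges and two
further edges of `G`, so a cross of `P` is one of `Q`.
-/

theorem Function.Injective.apply_eq_of_rel_apply {α : Type*} [Finite α] {r : α → α → Prop}
    [IsPartialOrder α r] {f : α → α} (hf : f.Injective) (hr : ∀ a, r a (f a)) (a : α) :
    f a = a := by
  have rel_iterate : ∀ b k, r b (f^[k] b) := by
    intro b k
    induction k with
    | zero => exact refl b
    | succ k ih => rw [Function.iterate_succ_apply']; exact _root_.trans ih (hr _)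
  obtain ⟨n, hn, hperiod⟩ := Function.mem_periodicPts.1 (hf.mem_periodicPts a)
  obtain ⟨k, rfl⟩ := Nat.exists_eq_add_one_of_ne_zero hn.ne'
  have hback : r (f a) a := by
    have := rel_iterate (f a) k
    rwa [← Function.iterate_succ_apply, hperiod.eq] at this
  exact (antisymm (hr a) hback).symm

namespace PureOrder

variable {V : Type*} {G : SimpleGraph V} {n m : ℕ}

theorem x_injective (P : PureOrder G n) : Function.Injective P.x :=
  (Sum.elim_injective.1 P.inj).1

theorem y_injective (P : PureOrder G n) : Function.Injective P.y :=
  (Sum.elim_injective.1 P.inj).2.1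

theorem x_ne_y (P : PureOrder G n) (i j : Fin n) : P.x i ≠ P.y j :=
  (Sum.elim_injective.1 P.inj).2.2 i j

def Paired (P : PureOrder G n) (u v : V) : Prop :=
  ∃ i, (u = P.x i ∧ v = P.y i) ∨ (u = P.y i ∧ v = P.x i)

theorem paired_x_y (P : PureOrder G n) (i : Fin n) : P.Paired (P.x i) (P.y i) :=
  ⟨i, .inl ⟨rfl, rfl⟩⟩

theorem exists_paired (P : PureOrder G n) (v : V) : ∃ w, P.Paired v w := by
  rcases P.cover v with ⟨i, rfl⟩ | ⟨i, rfl⟩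
  · exact ⟨P.y i, i, .inl ⟨rfl, rfl⟩⟩
  · exact ⟨P.x i, i, .inr ⟨rfl, rfl⟩⟩

namespace Paired

variable {P : PureOrder G n} {u v w : V}

theorem symm (h : P.Paired u v) : P.Paired v u := by
  obtain ⟨i, h | h⟩ := h
  · exact ⟨i, .inr h.symm⟩
  · exact ⟨i, .inl h.symm⟩

theorem adj (h : P.Paired u v) : G.Adj u v := by
  obtain ⟨i, ⟨rfl, rfl⟩ | ⟨rfl, rfl⟩⟩ := h
  · exact P.matching i
  · exact (P.matching i).symm

theorem unique (hv : P.Paired u v) (hw : P.Paired u w) : v = w := by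
  obtain ⟨i, ⟨rfl, rfl⟩ | ⟨rfl, rfl⟩⟩ := hv <;> obtain ⟨j, ⟨hij, rfl⟩ | ⟨hij, rfl⟩⟩ := hw
  · rw [P.x_injective hij]
  · exact absurd hij (P.x_ne_y i j)
  · exact absurd hij.symm (P.x_ne_y j i)
  · rw [P.y_injective hij]

end Paired

theorem hasCross_iff (P : PureOrder G n) :
    P.HasCross ↔ ∃ u u' v v', P.Paired u u' ∧ P.Paired v v' ∧ u ≠ v ∧ G.Adj u v' ∧ G.Adj v u' := by
  constructor
  · rintro ⟨i, j, hij, hij', hji⟩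
    exact ⟨P.x i, P.y i, P.x j, P.y j, P.paired_x_y i, P.paired_x_y j,
      fun h ↦ hij (P.x_injective h), hij', hji⟩
  · rintro ⟨u, u', v, v', ⟨i, ⟨rfl, rfl⟩ | ⟨rfl, rfl⟩⟩, ⟨j, ⟨rfl, rfl⟩ | ⟨rfl, rfl⟩⟩, huv, h, h'⟩
    · exact ⟨i, j, fun hij ↦ huv (congrArg P.x hij), h, h'⟩
    · exact absurd h (P.xIndep i j)
    · exact absurd h (P.yIndep i j)
    · exact ⟨j, i, fun hji ↦ huv (congrArg P.y hji.symm), h.symm, h'.symm⟩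

theorem isPartialOrder_of_not_hasCross {Q : PureOrder G m} (hQ : ¬ Q.HasCross) :
    IsPartialOrder (Fin m) (fun a b ↦ G.Adj (Q.x a) (Q.y b)) := by
  have antisymm_adj : ∀ a b, G.Adj (Q.x a) (Q.y b) → G.Adj (Q.x b) (Q.y a) → a = b :=
    fun a b hab hba ↦ by_contra fun hne ↦ hQ ⟨a, b, hne, hab, hba⟩
  refine { refl := Q.matching, trans := ?_, antisymm := antisymm_adj }
  intro a b c hab hbc
  by_cases hab' : a = b
  · exact hab' ▸ hbc
  by_cases hbc' : b = c
  · exact hbc' ▸ hab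
  by_cases hac' : a = c
  · exact absurd (antisymm_adj a b hab (hac' ▸ hbc)) hab'
  exact Q.pureCond a b c hab' hbc' hac' hab hbc

theorem exists_paired_x_y (P : PureOrder G n) (Q : PureOrder G m) (a : Fin m) :
    ∃ b, P.Paired (Q.x a) (Q.y b) := by
  obtain ⟨w, hw⟩ := P.exists_paired (Q.x a)
  rcases Q.cover w with ⟨c, rfl⟩ | ⟨b, rfl⟩
  · exact absurd hw.adj (Q.xIndep a c)
  · exact ⟨b, hw⟩

theorem paired_x_y_of_not_hasCross {Q : PureOrder G m} (hQ : ¬ Q.HasCross)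
    (P : PureOrder G n) (a : Fin m) : P.Paired (Q.x a) (Q.y a) := by
  choose σ hσ using exists_paired_x_y P Q
  have hσ_inj : σ.Injective := fun a b hab ↦
    Q.x_injective <| (hσ a).symm.unique (hab ▸ (hσ b).symm)
  have := isPartialOrder_of_not_hasCross hQ
  have hσ_id := hσ_inj.apply_eq_of_rel_apply (r := fun a b ↦ G.Adj (Q.x a) (Q.y b))
    (fun a ↦ (hσ a).adj) a
  simpa only [hσ_id] using hσ a

theorem Paired.of_not_hasCross {P : PureOrder G n} {Q : PureOrder G m} (hQ : ¬ Q.HasCross)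
    {u v : V} (h : P.Paired u v) : Q.Paired u v := by
  rcases Q.cover u with ⟨a, rfl⟩ | ⟨a, rfl⟩
  · exact ⟨a, .inl ⟨rfl, h.unique (paired_x_y_of_not_hasCross hQ P a)⟩⟩
  · exact ⟨a, .inr ⟨rfl, h.unique (paired_x_y_of_not_hasCross hQ P a).symm⟩⟩

end PureOrder

theorem hasCross_of_hasCross_general {V : Type*} (G : SimpleGraph V) {n m : ℕ}
    (P : PureOrder G n) (hP : P.HasCross) (Q : PureOrder G m) : Q.HasCross := by
  by_contra hQ
  obtain ⟨u, u', v, v', hu, hv, huv, h, h'⟩ := P.hasCross_iff.1 hP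
  exact hQ <| Q.hasCross_iff.2 ⟨u, u', v, v', hu.of_not_hasCross hQ, hv.of_not_hasCross hQ,
    huv, h, h'⟩

/-- If some pure order of a bipartite graph `G` has a cross, then every pure order of `G`
has a cross. -/
theorem hasCross_of_hasCross {V : Type*} [Fintype V] (G : SimpleGraph V) {n m : ℕ}
    (P : PureOrder G n) (hP : P.HasCross) (Q : PureOrder G m) : Q.HasCross :=
  hasCross_of_hasCross_general G P hP Q
end

section
/- Let G be a bipartite graph without isolated vertices, on at least two vertices, admitting a cross-free pure order X = {x_1, …, x_n}, Y = {y_1, …, y_n}. Then there exist indices i and j such that x_i has degree one in G and y_j has degree one in G; that is, G has two vertices of degree one lying in separate parts of the bipartition. -/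
theorem Finite.exists_forall_not_rel {α : Type*} [Finite α] [Nonempty α] (r : α → α → Prop)
    [IsStrictOrder α r] : ∃ a, ∀ b, ¬ r b a := by
  obtain ⟨a, -, ha⟩ :=
    (Finite.wellFounded_of_trans_of_irrefl r).has_min Set.univ Set.univ_nonempty
  exact ⟨a, fun b => ha b trivial⟩

namespace PureOrder

variable {V : Type*} {G : SimpleGraph V} {n : ℕ} (P : PureOrder G n)

def OffDiagAdj (a b : Fin n) : Prop := a ≠ b ∧ G.Adj (P.x a) (P.y b)

theorem isStrictOrder_offDiagAdj (hcf : ¬ P.HasCross) : IsStrictOrder (Fin n) P.OffDiagAdj where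
  irrefl _ h := h.1 rfl
  trans a b c := by
    rintro ⟨hab, hxy_ab⟩ ⟨hbc, hxy_bc⟩
    have hac : a ≠ c := by
      rintro rfl
      exact hcf ⟨a, b, hab, hxy_ab, hxy_bc⟩
    exact ⟨hac, P.pureCond a b c hab hbc hac hxy_ab hxy_bc⟩

theorem degree_x_eq_one (i : Fin n) [Fintype (G.neighborSet (P.x i))]
    (hi : ∀ b, ¬ P.OffDiagAdj i b) : G.degree (P.x i) = 1 := by
  refine SimpleGraph.degree_eq_one_iff_existsUnique_adj.mpr ⟨P.y i, P.matching i, fun w hw => ?_⟩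
  rcases P.cover w with ⟨a, rfl⟩ | ⟨b, rfl⟩
  · exact absurd hw (P.xIndep i a)
  · by_contra hbi
    exact hi b ⟨fun h => hbi (congrArg P.y h.symm), hw⟩

theorem degree_y_eq_one (j : Fin n) [Fintype (G.neighborSet (P.y j))]
    (hj : ∀ a, ¬ P.OffDiagAdj a j) : G.degree (P.y j) = 1 := by
  refine SimpleGraph.degree_eq_one_iff_existsUnique_adj.mpr
    ⟨P.x j, (P.matching j).symm, fun w hw => ?_⟩
  rcases P.cover w with ⟨a, rfl⟩ | ⟨b, rfl⟩
  · by_contra haj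
    exact hj a ⟨fun h => haj (congrArg P.x h), hw.symm⟩
  · exact absurd hw (P.yIndep j b)

end PureOrder

theorem crossFree_degree_one_general {V : Type*} [Fintype V] (G : SimpleGraph V)
    [DecidableRel G.Adj] {n : ℕ} (hn : 1 ≤ n) (P : PureOrder G n) (hcf : ¬ P.HasCross) :
    ∃ i j : Fin n, G.degree (P.x i) = 1 ∧ G.degree (P.y j) = 1 := by
  have : Nonempty (Fin n) := ⟨⟨0, hn⟩⟩
  have := P.isStrictOrder_offDiagAdj hcf
  obtain ⟨i, hi⟩ := Finite.exists_forall_not_rel (Function.swap P.OffDiagAdj)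
  obtain ⟨j, hj⟩ := Finite.exists_forall_not_rel P.OffDiagAdj
  exact ⟨i, j, P.degree_x_eq_one i hi, P.degree_y_eq_one j hj⟩

/-- A cross-free bipartite graph with at least two vertices has, for any pure order, a
vertex of degree one in each part of the bipartition. -/
theorem crossFree_degree_one {V : Type*} [Fintype V] [DecidableEq V] (G : SimpleGraph V)
    [DecidableRel G.Adj] {n : ℕ} (hn : 1 ≤ n) (P : PureOrder G n) (hcf : ¬ P.HasCross) :
    ∃ i j : Fin n, G.degree (P.x i) = 1 ∧ G.degree (P.y j) = 1 :=
  crossFree_degree_one_general G hn P hcf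
end

section
/- Let G be a bipartite graph without isolated vertices admitting a pure order. Then G has a cross-free pure order if and only if G has a pure order X = {x_1, …, x_n}, Y = {y_1, …, y_n} such that every edge x_i y_j of G satisfies i ≤ j. (By the Herzog–Hibi criterion, the latter condition is equivalent to the independence complex Ind(G) being Cohen-Macaulay.) -/
theorem exists_equiv_fin_monotone_of_isPartialOrder {α : Type*} [Fintype α]
    (r : α → α → Prop) [IsPartialOrder α r] :
    ∃ e : α ≃ Fin (Fintype.card α), ∀ a b, r a b → e a ≤ e b := by
  obtain ⟨s, hs, hrs⟩ := extend_partialOrder r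
  let : LinearOrder α :=
    { le := s
      le_refl := hs.refl
      le_trans := fun _ _ _ => hs.trans _ _ _
      le_antisymm := fun _ _ => hs.antisymm _ _
      le_total := hs.total
      toDecidableLE := Classical.decRel _ }
  let e := (monoEquivOfFin α rfl).symm
  exact ⟨e.toEquiv, fun a b hab => e.monotone (hrs a b hab)⟩

namespace PureOrder

variable {V : Type*} {G : SimpleGraph V} {n m : ℕ}

def reindex (P : PureOrder G n) (e : Fin n ≃ Fin m) : PureOrder G m where
  x := P.x ∘ e.symm
  y := P.y ∘ e.symm
  inj := by
    rw [← Sum.elim_comp_map]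
    exact P.inj.comp (e.symm.injective.sumMap e.symm.injective)
  cover v := (P.cover v).imp (fun ⟨i, hi⟩ => ⟨e i, by simp [hi]⟩)
    (fun ⟨i, hi⟩ => ⟨e i, by simp [hi]⟩)
  xIndep _ _ := P.xIndep _ _
  yIndep _ _ := P.yIndep _ _
  matching _ := P.matching _
  pureCond _ _ _ hij hjk hik := P.pureCond _ _ _
    (e.symm.injective.ne hij) (e.symm.injective.ne hjk) (e.symm.injective.ne hik)

variable (P : PureOrder G n)

def EdgeLE (i j : Fin n) : Prop := i = j ∨ G.Adj (P.x i) (P.y j)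

theorem edgeLE_trans (hP : ¬ P.HasCross) {i j k : Fin n} :
    P.EdgeLE i j → P.EdgeLE j k → P.EdgeLE i k := by
  rintro (rfl | hij) (rfl | hjk)
  · exact .inl rfl
  · exact .inr hjk
  · exact .inr hij
  by_cases hij' : i = j
  · exact .inr (hij' ▸ hjk)
  by_cases hjk' : j = k
  · exact .inr (hjk' ▸ hij)
  by_cases hik : i = k
  · exact (hP ⟨i, j, hij', hij, hik ▸ hjk⟩).elim
  exact .inr (P.pureCond i j k hij' hjk' hik hij hjk)

theorem edgeLE_antisymm (hP : ¬ P.HasCross) {i j : Fin n} :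
    P.EdgeLE i j → P.EdgeLE j i → i = j := by
  rintro (rfl | hij) (h | hji)
  · rfl
  · rfl
  · exact h.symm
  · by_contra hne
    exact hP ⟨i, j, hne, hij, hji⟩

theorem isPartialOrder_edgeLE (hP : ¬ P.HasCross) : IsPartialOrder (Fin n) P.EdgeLE where
  refl _ := .inl rfl
  trans _ _ _ := P.edgeLE_trans hP
  antisymm _ _ := P.edgeLE_antisymm hP

theorem exists_reindex_adj_le (hP : ¬ P.HasCross) :
    ∃ (m : ℕ) (e : Fin n ≃ Fin m),
      ∀ i j, G.Adj ((P.reindex e).x i) ((P.reindex e).y j) → i ≤ j := by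
  have := P.isPartialOrder_edgeLE hP
  obtain ⟨e, he⟩ := exists_equiv_fin_monotone_of_isPartialOrder P.EdgeLE
  refine ⟨_, e, fun i j hij => ?_⟩
  simpa using he _ _ (.inr hij)

theorem not_hasCross_of_adj_le (h : ∀ i j, G.Adj (P.x i) (P.y j) → i ≤ j) : ¬ P.HasCross :=
  fun ⟨_, _, hne, hij, hji⟩ => hne (le_antisymm (h _ _ hij) (h _ _ hji))

end PureOrder

theorem crossFree_iff_CM_order_general {V : Type*} (G : SimpleGraph V) :
    (∃ (n : ℕ) (P : PureOrder G n), ¬ P.HasCross) ↔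
    (∃ (n : ℕ) (P : PureOrder G n), ∀ i j, G.Adj (P.x i) (P.y j) → i ≤ j) := by
  constructor
  · rintro ⟨n, P, hP⟩
    obtain ⟨m, e, he⟩ := P.exists_reindex_adj_le hP
    exact ⟨m, P.reindex e, he⟩
  · rintro ⟨n, P, h⟩
    exact ⟨n, P, P.not_hasCross_of_adj_le h⟩

/-- A bipartite graph admitting a pure order has a cross-free pure order if and only if it
has a pure order in which every edge `x_i y_j` satisfies `i ≤ j` (by the Herzog–Hibi
criterion, the latter is equivalent to the independence complex being Cohen-Macaulay). -/
theorem crossFree_iff_CM_order {V : Type*} [Fintype V] (G : SimpleGraph V)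
    (hex : ∃ n : ℕ, Nonempty (PureOrder G n)) :
    (∃ (n : ℕ) (P : PureOrder G n), ¬ P.HasCross) ↔
    (∃ (n : ℕ) (P : PureOrder G n), ∀ i j, G.Adj (P.x i) (P.y j) → i ≤ j) :=
  crossFree_iff_CM_order_general G
end

section
/- Let G be a bipartite graph without isolated vertices with a pure order X = {x_1, …, x_n}, Y = {y_1, …, y_n} that has a cross x_a y_b, x_b y_a (a ≠ b). Then the open neighborhoods satisfy N_G(x_a) = N_G(x_b) and N_G(y_a) = N_G(y_b). -/
namespace PureOrder

variable {V : Type*} {G : SimpleGraph V} {n : ℕ} (P : PureOrder G n)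

/-- Every neighbour `y_k` of `x_a` is reached from `x_b` by the purity step `x_b y_a`, `x_a y_k`. -/
lemma neighborSet_x_subset_of_adj {a b : Fin n} (hab : a ≠ b) (hxy : G.Adj (P.x b) (P.y a)) :
    G.neighborSet (P.x a) ⊆ G.neighborSet (P.x b) := by
  intro v hv
  rw [SimpleGraph.mem_neighborSet] at hv ⊢
  rcases P.cover v with ⟨k, rfl⟩ | ⟨k, rfl⟩
  · exact absurd hv (P.xIndep a k)
  rcases eq_or_ne k a with rfl | hka
  · exact hxy
  rcases eq_or_ne k b with rfl | hkb
  · exact P.matching k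
  exact P.pureCond b a k hab.symm hka.symm hkb.symm hxy hv

/-- Every neighbour `x_k` of `y_a` reaches `y_b` by the purity step `x_k y_a`, `x_a y_b`. -/
lemma neighborSet_y_subset_of_adj {a b : Fin n} (hab : a ≠ b) (hxy : G.Adj (P.x a) (P.y b)) :
    G.neighborSet (P.y a) ⊆ G.neighborSet (P.y b) := by
  intro v hv
  rw [SimpleGraph.mem_neighborSet, G.adj_comm] at hv ⊢
  rcases P.cover v with ⟨k, rfl⟩ | ⟨k, rfl⟩
  · rcases eq_or_ne k a with rfl | hka
    · exact hxy
    rcases eq_or_ne k b with rfl | hkb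
    · exact P.matching k
    exact P.pureCond k a b hka hab hkb hv hxy
  · exact absurd hv (P.yIndep k a)

end PureOrder

theorem neighborSet_eq_of_cross_general {V : Type*} (G : SimpleGraph V) {n : ℕ}
    (P : PureOrder G n) (a b : Fin n) (hab : a ≠ b)
    (h1 : G.Adj (P.x a) (P.y b)) (h2 : G.Adj (P.x b) (P.y a)) :
    G.neighborSet (P.x a) = G.neighborSet (P.x b) ∧
      G.neighborSet (P.y a) = G.neighborSet (P.y b) :=
  ⟨(P.neighborSet_x_subset_of_adj hab h2).antisymm (P.neighborSet_x_subset_of_adj hab.symm h1),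
    (P.neighborSet_y_subset_of_adj hab h1).antisymm (P.neighborSet_y_subset_of_adj hab.symm h2)⟩

/-- If a pure order of a bipartite graph `G` has a cross `x_a y_b`, `x_b y_a` (`a ≠ b`),
then `N_G(x_a) = N_G(x_b)` and `N_G(y_a) = N_G(y_b)`. -/
theorem neighborSet_eq_of_cross {V : Type*} [Fintype V] (G : SimpleGraph V) {n : ℕ}
    (P : PureOrder G n) (a b : Fin n) (hab : a ≠ b)
    (h1 : G.Adj (P.x a) (P.y b)) (h2 : G.Adj (P.x b) (P.y a)) :
    G.neighborSet (P.x a) = G.neighborSet (P.x b) ∧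
      G.neighborSet (P.y a) = G.neighborSet (P.y b) :=
  neighborSet_eq_of_cross_general G P a b hab h1 h2
end

section
/- Let G be a bipartite graph whose vertex set is tri-partitioned as X = {x_1, …, x_n}, Y = {y_1, …, y_n}, Z = {z_1, …, z_m}, where Z consists exactly of the isolated vertices of G, X and Y form a pure order of G ∖ Z, and every edge x_i y_j of G satisfies i ≤ j. Let Ǧ be the compression of G. Then for every j with 0 ≤ j ≤ n+m, the number of independent sets of cardinality j in G equals Σ_{i=0}^{j} C(n+m−i, j−i) · (the number of independent sets of cardinality i in Ǧ); equivalently, the h-vector of Ind(G) (which is pure of dimension n+m−1) equals the face vector of Ind(Ǧ). -/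
/-- The number of independent sets of cardinality `k` in `G`
(the face number `f_{k-1}` of the independence complex of `G`). -/
noncomputable def indepCount {V : Type*} (G : SimpleGraph V) (k : ℕ) : ℕ :=
  Set.ncard {s : Finset V | IsIndep G s ∧ s.card = k}

/-- The compression `Ǧ` of a bipartite graph `G` with vertices `x_1, …, x_n`,
`y_1, …, y_n` (and isolated vertices): the graph on `{x_1, …, x_n}` (encoded as `Fin n`)
whose edges are the pairs `x_i x_j` with `i < j` such that `x_i y_j` is an edge of `G`. -/
def compression {V : Type*} {n : ℕ} (G : SimpleGraph V) (x y : Fin n → V) :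
    SimpleGraph (Fin n) :=
  SimpleGraph.fromRel fun i j => i < j ∧ G.Adj (x i) (y j)

/-! The relation `i ≼ j :↔ x_i ~ y_j` is a partial order on the indices: reflexive by the
matching, transitive by purity, antisymmetric because it refines `≤`. The independent sets of
`Ǧ` are its antichains, and an independent set of `G` amounts to index sets `P, Q, R` of its
`x`-, `y`- and `z`-vertices such that no element of `P` lies below an element of `Q`.
Sending `(P, Q)` to `(S, B) = (max Q, P ∪ Q)` is a bijection onto the pairs of an antichain `S`
and a superset `B` of it; the inverse recovers `Q` as the part of `B` below `S`. For a fixed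
antichain `S` of size `i`, the pairs `(B, R)` with `S ⊆ B` and `|B| + |R| = j` are counted by
`C(n + m - i, j - i)`. -/

open Finset
open scoped Classical

section Supersets

variable {α β : Type*} [Fintype α] [Fintype β]

theorem card_supersets_with_card (A : Finset α) {j : ℕ} (hA : #A ≤ j) :
    #{U : Finset α | A ⊆ U ∧ #U = j} = (Fintype.card α - #A).choose (j - #A) := by
  rw [← card_compl, ← card_powersetCard]
  have disjoint_of_subset_compl {U : Finset α} (hU : U ⊆ Aᶜ) : Disjoint U A :=
    disjoint_left.2 fun a ha => mem_compl.1 (hU ha)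
  apply card_nbij' (· \ A) (· ∪ A) <;> intro U hU <;>
    simp only [mem_coe, mem_filter, mem_powersetCard, mem_univ, true_and] at hU ⊢
  · rw [card_sdiff_of_subset hU.1, hU.2]
    exact ⟨fun a ha => mem_compl.2 (mem_sdiff.1 ha).2, rfl⟩
  · rw [card_union_of_disjoint (disjoint_of_subset_compl hU.1), hU.2]
    exact ⟨subset_union_right, by omega⟩
  · exact sdiff_union_of_subset hU.1
  · exact union_sdiff_cancel_right (disjoint_of_subset_compl hU.1)

theorem card_superset_pairs_with_card (S : Finset α) {j : ℕ} (hS : #S ≤ j) :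
    #{p : Finset α × Finset β | S ⊆ p.1 ∧ #p.1 + #p.2 = j}
      = (Fintype.card α + Fintype.card β - #S).choose (j - #S) := by
  rw [← Fintype.card_sum, ← card_map (Function.Embedding.inl : α ↪ α ⊕ β),
    ← card_supersets_with_card _ (by rwa [card_map])]
  refine card_equiv sumEquiv.symm.toEquiv fun p => ?_
  simp [map_inl_subset_iff_subset_toLeft]

variable {r : α → α → Prop}

theorem card_antichain_subset_eq_sum (j : ℕ) :
    #{c : (Finset α × Finset α) × Finset β |
        IsAntichain r (c.1.1 : Set α) ∧ c.1.1 ⊆ c.1.2 ∧ #c.1.2 + #c.2 = j}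
      = ∑ i ∈ range (j + 1), (Fintype.card α + Fintype.card β - i).choose (j - i) *
          #{S : Finset α | IsAntichain r (S : Set α) ∧ #S = i} := by
  rw [card_eq_sum_card_fiberwise (f := fun c => #c.1.1) (t := range (j + 1))]
  · refine sum_congr rfl fun i hi => ?_
    rw [card_eq_sum_card_fiberwise (f := fun c => c.1.1)
      (t := {S : Finset α | IsAntichain r (S : Set α) ∧ #S = i})]
    · refine (sum_const_nat fun S hS => ?_).trans (mul_comm _ _)
      obtain ⟨hS, rfl⟩ := (mem_filter.1 hS).2
      rw [← card_superset_pairs_with_card S (Nat.lt_succ_iff.1 (mem_range.1 hi))]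
      apply card_nbij' (fun c => (c.1.2, c.2)) (fun p => ((S, p.1), p.2))
      · rintro ⟨⟨_, B⟩, R⟩ hc
        simp only [coe_filter, mem_filter, mem_univ, true_and, Set.mem_ofPred_eq] at hc
        obtain ⟨⟨⟨-, hSB, hj⟩, -⟩, rfl⟩ := hc
        simp [hSB, hj]
      · rintro ⟨B, R⟩ hc
        simp_all
      · rintro ⟨⟨_, B⟩, R⟩ hc
        simp_all
      · exact fun _ _ => rfl
    · intro c hc
      simp_all
  · intro c hc
    simp only [coe_filter, mem_univ, true_and, Set.mem_ofPred_eq, coe_range, Set.mem_Iio] at hc ⊢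
    have := card_le_card hc.2.1
    omega

end Supersets

section Antichain

variable {α : Type*} {r : α → α → Prop}

variable (r) in
noncomputable def maximalsBy (Q : Finset α) : Finset α := {q ∈ Q | ∀ b ∈ Q, r q b → b = q}

variable (r) in
noncomputable def lowerIn (S B : Finset α) : Finset α := {b ∈ B | ∃ s ∈ S, r b s}

theorem isAntichain_maximalsBy (Q : Finset α) : IsAntichain r (maximalsBy r Q : Set α) := by
  intro a ha b hb hab hr
  simp only [maximalsBy, coe_filter] at ha hb
  exact hab (ha.2 b hb.1 hr).symm

theorem maximalsBy_subset (Q : Finset α) : maximalsBy r Q ⊆ Q := filter_subset _ _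

theorem lowerIn_subset (S B : Finset α) : lowerIn r S B ⊆ B := filter_subset _ _

theorem disjoint_of_forall_not_rel (hrefl : ∀ a, r a a) {P Q : Finset α}
    (hPQ : ∀ p ∈ P, ∀ q ∈ Q, ¬ r p q) : Disjoint P Q :=
  disjoint_left.2 fun a hP hQ => hPQ a hP a hQ (hrefl a)

theorem forall_not_rel_lowerIn (htrans : ∀ a b c, r a b → r b c → r a c) (S B : Finset α) :
    ∀ p ∈ B \ lowerIn r S B, ∀ q ∈ lowerIn r S B, ¬ r p q := by
  intro p hp q hq hpq
  obtain ⟨hpB, hpS⟩ := mem_sdiff.1 hp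
  obtain ⟨-, s, hs, hqs⟩ := mem_filter.1 hq
  exact hpS (mem_filter.2 ⟨hpB, s, hs, htrans p q s hpq hqs⟩)

variable [PartialOrder α]

theorem exists_mem_maximalsBy_rel (hrefl : ∀ a, r a a)
    (htrans : ∀ a b c, r a b → r b c → r a c) (hle : ∀ a b, r a b → a ≤ b)
    {Q : Finset α} {q : α} (hq : q ∈ Q) :
    ∃ s ∈ maximalsBy r Q, r q s := by
  obtain ⟨s, -, hs⟩ := exists_le_maximal {b ∈ Q | r q b} (mem_filter.2 ⟨hq, hrefl q⟩)
  obtain ⟨hsQ, hqs⟩ := mem_filter.1 hs.prop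
  refine ⟨s, mem_filter.2 ⟨hsQ, fun b hb hsb => ?_⟩, hqs⟩
  have hbs : b ≤ s := hs.2 (mem_filter.2 ⟨hb, htrans q s b hqs hsb⟩) (hle s b hsb)
  exact le_antisymm hbs (hle s b hsb)

theorem lowerIn_maximalsBy_union (hrefl : ∀ a, r a a)
    (htrans : ∀ a b c, r a b → r b c → r a c) (hle : ∀ a b, r a b → a ≤ b)
    {P Q : Finset α} (hPQ : ∀ p ∈ P, ∀ q ∈ Q, ¬ r p q) :
    lowerIn r (maximalsBy r Q) (P ∪ Q) = Q := by
  ext b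
  simp only [lowerIn, mem_filter, mem_union]
  constructor
  · rintro ⟨hbP | hbQ, s, hs, hbs⟩
    · exact absurd hbs (hPQ b hbP s (mem_filter.1 hs).1)
    · exact hbQ
  · exact fun hbQ => ⟨Or.inr hbQ, exists_mem_maximalsBy_rel hrefl htrans hle hbQ⟩

theorem maximalsBy_lowerIn (hrefl : ∀ a, r a a)
    (htrans : ∀ a b c, r a b → r b c → r a c) (hle : ∀ a b, r a b → a ≤ b)
    {S B : Finset α} (hS : IsAntichain r (S : Set α)) (hSB : S ⊆ B) :
    maximalsBy r (lowerIn r S B) = S := by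
  have mem_lowerIn {s : α} (hs : s ∈ S) : s ∈ lowerIn r S B :=
    mem_filter.2 ⟨hSB hs, s, hs, hrefl s⟩
  ext q
  simp only [maximalsBy, mem_filter]
  constructor
  · rintro ⟨hq, hqmax⟩
    obtain ⟨-, s, hs, hqs⟩ := mem_filter.1 hq
    rwa [← hqmax s (mem_lowerIn hs) hqs]
  · refine fun hqS => ⟨mem_lowerIn hqS, fun b hb hqb => ?_⟩
    obtain ⟨-, s, hs, hbs⟩ := mem_filter.1 hb
    obtain rfl : q = s := by_contra fun hne => hS hqS hs hne (htrans q b s hqb hbs)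
    exact le_antisymm (hle b q hbs) (hle q b hqb)

variable [Fintype α]

theorem card_forall_not_rel_eq_card_antichain {β : Type*} [Fintype β] (hrefl : ∀ a, r a a)
    (htrans : ∀ a b c, r a b → r b c → r a c) (hle : ∀ a b, r a b → a ≤ b) (j : ℕ) :
    #{c : (Finset α × Finset α) × Finset β |
        (∀ p ∈ c.1.1, ∀ q ∈ c.1.2, ¬ r p q) ∧ #c.1.1 + #c.1.2 + #c.2 = j}
      = #{c : (Finset α × Finset α) × Finset β |
        IsAntichain r (c.1.1 : Set α) ∧ c.1.1 ⊆ c.1.2 ∧ #c.1.2 + #c.2 = j} := by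
  apply card_nbij' (fun c => ((maximalsBy r c.1.2, c.1.1 ∪ c.1.2), c.2))
    (fun c => ((c.1.2 \ lowerIn r c.1.1 c.1.2, lowerIn r c.1.1 c.1.2), c.2)) <;>
    rintro ⟨⟨P, Q⟩, R⟩ h <;> simp only [mem_coe, mem_filter, mem_univ, true_and] at h ⊢
  · refine ⟨isAntichain_maximalsBy Q, (maximalsBy_subset Q).trans subset_union_right, ?_⟩
    rw [card_union_of_disjoint (disjoint_of_forall_not_rel hrefl h.1), h.2]
  · refine ⟨forall_not_rel_lowerIn htrans P Q, ?_⟩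
    rw [card_sdiff_add_card_eq_card (lowerIn_subset P Q), h.2.2]
  · rw [lowerIn_maximalsBy_union hrefl htrans hle h.1, union_sdiff_cancel_right
      (disjoint_of_forall_not_rel hrefl h.1)]
  · rw [maximalsBy_lowerIn hrefl htrans hle h.1 h.2.1, sdiff_union_of_subset (lowerIn_subset P Q)]

end Antichain

section Bipartite

variable {V ι κ μ : Type*} {G : SimpleGraph V} {x : ι → V} {y : κ → V} {z : μ → V}

theorem isIndep_iff_forall_not_adj
    (hcover : ∀ v : V, (∃ i, v = x i) ∨ (∃ i, v = y i) ∨ (∃ i, v = z i))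
    (hz : ∀ i u, ¬ G.Adj (z i) u) (hxIndep : ∀ i j, ¬ G.Adj (x i) (x j))
    (hyIndep : ∀ i j, ¬ G.Adj (y i) (y j)) (T : Finset V) :
    IsIndep G T ↔ ∀ i, x i ∈ T → ∀ j, y j ∈ T → ¬ G.Adj (x i) (y j) := by
  refine ⟨fun h i hi j hj => h _ hi _ hj, fun h u hu v hv huv => ?_⟩
  rcases hcover u with ⟨i, rfl⟩ | ⟨i, rfl⟩ | ⟨i, rfl⟩ <;>
    rcases hcover v with ⟨k, rfl⟩ | ⟨k, rfl⟩ | ⟨k, rfl⟩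
  all_goals first
    | exact hxIndep _ _ huv | exact hyIndep _ _ huv | exact hz _ _ huv | exact hz _ _ huv.symm
    | exact h _ hu _ hv huv | exact h _ hv _ hu huv.symm

theorem bijective_sumElim (hinj : Function.Injective (Sum.elim (Sum.elim x y) z))
    (hcover : ∀ v : V, (∃ i, v = x i) ∨ (∃ i, v = y i) ∨ (∃ i, v = z i)) :
    Function.Bijective (Sum.elim (Sum.elim x y) z) := by
  refine ⟨hinj, fun v => ?_⟩
  rcases hcover v with ⟨i, rfl⟩ | ⟨i, rfl⟩ | ⟨i, rfl⟩
  exacts [⟨.inl (.inl i), rfl⟩, ⟨.inl (.inr i), rfl⟩, ⟨.inr i, rfl⟩]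

variable (x y z) in
noncomputable def finsetCoords (hbij : Function.Bijective (Sum.elim (Sum.elim x y) z)) :
    Finset V ≃ (Finset ι × Finset κ) × Finset μ :=
  (Equiv.ofBijective _ hbij).symm.finsetCongr.trans
    (sumEquiv.toEquiv.trans (sumEquiv.toEquiv.prodCongr (Equiv.refl _)))

section Coords

variable (hbij : Function.Bijective (Sum.elim (Sum.elim x y) z)) (T : Finset V)

theorem mem_finsetCoords_fst_fst {i : ι} :
    i ∈ (finsetCoords x y z hbij T).1.1 ↔ x i ∈ T := by
  simp [finsetCoords]

theorem mem_finsetCoords_fst_snd {i : κ} :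
    i ∈ (finsetCoords x y z hbij T).1.2 ↔ y i ∈ T := by
  simp [finsetCoords]

theorem card_finsetCoords :
    #(finsetCoords x y z hbij T).1.1 + #(finsetCoords x y z hbij T).1.2
      + #(finsetCoords x y z hbij T).2 = #T := by
  simp [finsetCoords, card_toLeft_add_card_toRight]

end Coords

theorem indepCount_eq_card_forall_not_adj [Fintype V] [Fintype ι] [Fintype κ] [Fintype μ]
    (hinj : Function.Injective (Sum.elim (Sum.elim x y) z))
    (hcover : ∀ v : V, (∃ i, v = x i) ∨ (∃ i, v = y i) ∨ (∃ i, v = z i))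
    (hz : ∀ i u, ¬ G.Adj (z i) u) (hxIndep : ∀ i j, ¬ G.Adj (x i) (x j))
    (hyIndep : ∀ i j, ¬ G.Adj (y i) (y j)) (j : ℕ) :
    indepCount G j = #{c : (Finset ι × Finset κ) × Finset μ |
      (∀ p ∈ c.1.1, ∀ q ∈ c.1.2, ¬ G.Adj (x p) (y q)) ∧ #c.1.1 + #c.1.2 + #c.2 = j} := by
  have hbij := bijective_sumElim hinj hcover
  rw [indepCount, Set.ncard_eq_toFinset_card', Set.toFinset_ofPred]
  refine card_equiv (finsetCoords x y z hbij) fun T => ?_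
  simp only [mem_filter, mem_univ, true_and, card_finsetCoords,
    isIndep_iff_forall_not_adj hcover hz hxIndep hyIndep, mem_finsetCoords_fst_fst,
    mem_finsetCoords_fst_snd]

end Bipartite

section Compression

variable {V : Type*} {G : SimpleGraph V} {n : ℕ} {x y : Fin n → V}

theorem adj_trans_of_pure (hmatching : ∀ i, G.Adj (x i) (y i))
    (hpure : ∀ i j k, i ≠ j → j ≠ k → i ≠ k →
      G.Adj (x i) (y j) → G.Adj (x j) (y k) → G.Adj (x i) (y k))
    (i j k : Fin n) (hij : G.Adj (x i) (y j)) (hjk : G.Adj (x j) (y k)) : G.Adj (x i) (y k) := by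
  rcases eq_or_ne i j with rfl | hij'
  · exact hjk
  rcases eq_or_ne j k with rfl | hjk'
  · exact hij
  rcases eq_or_ne i k with rfl | hik'
  · exact hmatching i
  exact hpure i j k hij' hjk' hik' hij hjk

theorem isIndep_compression_iff (hle : ∀ i j, G.Adj (x i) (y j) → i ≤ j)
    (S : Finset (Fin n)) :
    IsIndep (compression G x y) S ↔
      IsAntichain (fun i j => G.Adj (x i) (y j)) (S : Set (Fin n)) := by
  simp only [IsIndep, IsAntichain, Set.Pairwise, mem_coe, compression, SimpleGraph.fromRel_adj]
  constructor
  · intro h i hi j hj hne hadj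
    exact h i hi j hj ⟨hne, Or.inl ⟨lt_of_le_of_ne (hle i j hadj) hne, hadj⟩⟩
  · rintro h i hi j hj ⟨hne, ⟨-, hadj⟩ | ⟨-, hadj⟩⟩
    exacts [h hi hj hne hadj, h hj hi hne.symm hadj]

theorem indepCount_compression (hle : ∀ i j, G.Adj (x i) (y j) → i ≤ j) (i : ℕ) :
    indepCount (compression G x y) i
      = #{S : Finset (Fin n) | IsAntichain (fun i j => G.Adj (x i) (y j)) (S : Set (Fin n)) ∧
          #S = i} := by
  simp only [indepCount, Set.ncard_eq_toFinset_card', Set.toFinset_ofPred,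
    isIndep_compression_iff hle]

end Compression

/-- Let `G` be a bipartite graph whose vertex set is tri-partitioned into
`X = {x_1, …, x_n}`, `Y = {y_1, …, y_n}` and the isolated vertices `Z = {z_1, …, z_m}`,
where `X, Y` form a pure order of `G ∖ Z` and every edge `x_i y_j` satisfies `i ≤ j`.
Then the `h`-vector of `Ind(G)` (pure of dimension `n+m-1`) is the face vector of
`Ind(Ǧ)`: for `0 ≤ j ≤ n+m` the number of independent sets of cardinality `j` in `G`
equals `∑_{i=0}^{j} C(n+m-i, j-i) ·` (number of independent sets of cardinality `i` in
the compression `Ǧ`). -/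
theorem compression_h_eq_f {V : Type*} [Fintype V] (G : SimpleGraph V) {n m : ℕ}
    (x y : Fin n → V) (z : Fin m → V)
    (hinj : Function.Injective (Sum.elim (Sum.elim x y) z))
    (hcover : ∀ v : V, (∃ i, v = x i) ∨ (∃ i, v = y i) ∨ (∃ i, v = z i))
    (hz : ∀ i u, ¬ G.Adj (z i) u)
    (hxIndep : ∀ i j, ¬ G.Adj (x i) (x j))
    (hyIndep : ∀ i j, ¬ G.Adj (y i) (y j))
    (hmatching : ∀ i, G.Adj (x i) (y i))
    (hpure : ∀ i j k, i ≠ j → j ≠ k → i ≠ k →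
      G.Adj (x i) (y j) → G.Adj (x j) (y k) → G.Adj (x i) (y k))
    (hle : ∀ i j, G.Adj (x i) (y j) → i ≤ j) :
    ∀ j ≤ n + m,
      indepCount G j =
        ∑ i ∈ Finset.range (j + 1),
          (n + m - i).choose (j - i) * indepCount (compression G x y) i := by
  intro j _
  rw [indepCount_eq_card_forall_not_adj hinj hcover hz hxIndep hyIndep,
    card_forall_not_rel_eq_card_antichain hmatching (adj_trans_of_pure hmatching hpure) hle,
    card_antichain_subset_eq_sum]
  simp only [Fintype.card_fin, indepCount_compression hle]
end

section
/- Every bipartite graph G on vertices v_1, …, v_n has an extrusion Ĝ whose independence complex is pure; that is, there is an extrusion Ĝ of G in which every maximal independent set has cardinality exactly n. (Consequently, by the Herzog–Hibi criterion, every bipartite graph is Cohen-Macaulay extrudable.) -/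
/-- `H` is an extrusion of the graph `G` on vertices `v_1, …, v_n`: `H` is the bipartite
graph on `x_1, …, x_n` (encoded `Sum.inl`) and `y_1, …, y_n` (encoded `Sum.inr`) whose
edges are the `x_i y_i` together with, for each edge `v_i v_j` of `G`, exactly one of
`x_i y_j` or `x_j y_i`, and no other edges. -/
def IsExtrusion {n : ℕ} (G : SimpleGraph (Fin n)) (H : SimpleGraph (Fin n ⊕ Fin n)) :
    Prop :=
  (∀ i j, ¬ H.Adj (Sum.inl i) (Sum.inl j)) ∧
  (∀ i j, ¬ H.Adj (Sum.inr i) (Sum.inr j)) ∧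
  (∀ i, H.Adj (Sum.inl i) (Sum.inr i)) ∧
  (∀ i j, i ≠ j →
    ((H.Adj (Sum.inl i) (Sum.inr j) ∨ H.Adj (Sum.inl j) (Sum.inr i)) ↔ G.Adj i j)) ∧
  (∀ i j, i ≠ j → ¬ (H.Adj (Sum.inl i) (Sum.inr j) ∧ H.Adj (Sum.inl j) (Sum.inr i)))

/-!
Orient every edge of a bipartite graph from the colour class `0` to the colour class `1`,
and extrude along this orientation: `x_i y_j` is an edge for `i = j` or `i → j`.
A maximal independent set `s` of the extrusion contains one of `x_i`, `y_i` for every `i`: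
otherwise maximality gives neighbours `y_j ∈ s` of `x_i` and `x_k ∈ s` of `y_i` with
`k → i → j`, which is impossible since every vertex is a source or a sink. As `x_i y_i` is an
edge, `s` contains exactly one of them, so it has `n` elements.
-/

open Finset

theorem isIndep_insert {V : Type*} {G : SimpleGraph V} [DecidableEq V] {s : Finset V}
    {v : V} : IsIndep G (insert v s) ↔ IsIndep G s ∧ ∀ u ∈ s, ¬ G.Adj v u := by
  simp only [IsIndep, mem_insert, forall_eq_or_imp, G.loopless.irrefl, not_false_eq_true,
    true_and]
  constructor
  · exact fun h => ⟨fun u hu => (h.2 u hu).2, h.1⟩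
  · exact fun h => ⟨h.2, fun u hu => ⟨fun huv => h.2 u hu huv.symm, h.1 u hu⟩⟩

theorem exists_adj_of_maximal_isIndep {V : Type*} {G : SimpleGraph V} {s : Finset V} (hs : IsIndep G s) (hmax : ∀ s', IsIndep G s' → s ⊆ s' → s = s')
    {v : V} (hv : v ∉ s) : ∃ u ∈ s, G.Adj v u := by
  classical
  by_contra! h
  have := hmax _ (isIndep_insert.2 ⟨hs, h⟩) (subset_insert v s)
  exact hv (this ▸ mem_insert_self v s)

theorem Finset.card_eq_of_mem_inl_iff_notMem_inr {α : Type*} [Fintype α]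
    {s : Finset (α ⊕ α)} (h : ∀ i, Sum.inl i ∈ s ↔ Sum.inr i ∉ s) :
    #s = Fintype.card α := by
  classical
  have : s.toRight = s.toLeftᶜ := by ext i; simp [h]
  rw [← card_toLeft_add_card_toRight, this, card_add_card_compl]

section Extrusion

variable {V : Type*} (D : V → V → Prop)

def extrusionOf : SimpleGraph (V ⊕ V) :=
  SimpleGraph.fromRel fun a b =>
    match a, b with
    | .inl i, .inr j => i = j ∨ D i j
    | _, _ => False

variable {D}

@[simp]
theorem extrusionOf_adj_inl_inr {i j : V} :
    (extrusionOf D).Adj (.inl i) (.inr j) ↔ i = j ∨ D i j := by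
  simp [extrusionOf]

@[simp]
theorem extrusionOf_adj_inr_inl {i j : V} :
    (extrusionOf D).Adj (.inr j) (.inl i) ↔ i = j ∨ D i j := by
  simp [extrusionOf]

@[simp]
theorem not_extrusionOf_adj_inl_inl {i j : V} : ¬ (extrusionOf D).Adj (.inl i) (.inl j) := by
  simp [extrusionOf]

@[simp]
theorem not_extrusionOf_adj_inr_inr {i j : V} : ¬ (extrusionOf D).Adj (.inr i) (.inr j) := by
  simp [extrusionOf]

theorem isExtrusion_extrusionOf {n : ℕ} {G : SimpleGraph (Fin n)} {D : Fin n → Fin n → Prop}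
    (horient : ∀ i j, D i j ∨ D j i ↔ G.Adj i j) (hasymm : ∀ i j, D i j → ¬ D j i) :
    IsExtrusion G (extrusionOf D) := by
  refine ⟨fun _ _ => not_extrusionOf_adj_inl_inl, fun _ _ => not_extrusionOf_adj_inr_inr,
    fun _ => extrusionOf_adj_inl_inr.2 (.inl rfl), fun i j hij => ?_, fun i j hij => ?_⟩
  · simpa [hij, Ne.symm hij] using horient i j
  · simpa [hij, Ne.symm hij] using hasymm i j

theorem card_eq_of_maximal_isIndep_extrusionOf [Fintype V]
    (hD : ∀ i j k, D k i → ¬ D i j) {s : Finset (V ⊕ V)} (hs : IsIndep (extrusionOf D) s)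
    (hmax : ∀ s', IsIndep (extrusionOf D) s' → s ⊆ s' → s = s') :
    #s = Fintype.card V := by
  refine card_eq_of_mem_inl_iff_notMem_inr fun i => ⟨fun hx hy => ?_, fun hy => ?_⟩
  · exact hs _ hx _ hy (extrusionOf_adj_inl_inr.2 (.inl rfl))
  by_contra hx
  obtain ⟨_ | j, hyj, hxy⟩ := exists_adj_of_maximal_isIndep hs hmax hx
  · exact not_extrusionOf_adj_inl_inl hxy
  obtain ⟨k | _, hxk, hyx⟩ := exists_adj_of_maximal_isIndep hs hmax hy
  · rcases extrusionOf_adj_inl_inr.1 hxy with rfl | hij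
    · exact hy hyj
    rcases extrusionOf_adj_inr_inl.1 hyx with rfl | hki
    · exact hx hxk
    exact hD i j k hki hij
  · exact not_extrusionOf_adj_inr_inr hyx

end Extrusion

namespace SimpleGraph.Coloring

variable {V : Type*} {G : SimpleGraph V} (C : G.Coloring (Fin 2))

def orientFromZero (i j : V) : Prop := G.Adj i j ∧ C i = 0

variable {C}

theorem orientFromZero_or_orientFromZero_iff {i j : V} :
    C.orientFromZero i j ∨ C.orientFromZero j i ↔ G.Adj i j := by
  refine ⟨by rintro (⟨h, -⟩ | ⟨h, -⟩) <;> [exact h; exact h.symm], fun h => ?_⟩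
  have : C i ≠ C j := C.valid h
  exact (by omega : C i = 0 ∨ C j = 0).imp (⟨h, ·⟩) (⟨h.symm, ·⟩)

theorem not_orientFromZero_of_orientFromZero {i j k : V} (hki : C.orientFromZero k i) :
    ¬ C.orientFromZero i j :=
  fun hij => C.valid hki.1 (hki.2.trans hij.2.symm)

end SimpleGraph.Coloring

/-- Every bipartite graph `G` on `n` vertices has an extrusion whose independence complex
is pure: every maximal independent set has cardinality exactly `n` (hence, by the
Herzog–Hibi criterion, every bipartite graph is Cohen-Macaulay extrudable). -/
theorem bipartite_extrudable {n : ℕ} (G : SimpleGraph (Fin n)) (hG : G.Colorable 2) :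
    ∃ H : SimpleGraph (Fin n ⊕ Fin n), IsExtrusion G H ∧
      ∀ s : Finset (Fin n ⊕ Fin n), IsIndep H s →
        (∀ s', IsIndep H s' → s ⊆ s' → s = s') → s.card = n := by
  obtain ⟨C⟩ := hG
  have hD : ∀ i j k, C.orientFromZero k i → ¬ C.orientFromZero i j :=
    fun _ _ _ => SimpleGraph.Coloring.not_orientFromZero_of_orientFromZero
  refine ⟨extrusionOf C.orientFromZero, isExtrusion_extrusionOf
    (fun _ _ => SimpleGraph.Coloring.orientFromZero_or_orientFromZero_iff)
    (fun i j => hD j i i), fun s hs hmax => ?_⟩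
  simpa using card_eq_of_maximal_isIndep_extrusionOf hD hs hmax
end

section
/- Let G be a finite simple graph containing an odd hole, i.e., an induced cycle of odd length at least five. Then no extrusion Ĝ of G has a pure independence complex; in particular, G is not Cohen-Macaulay extrudable. -/
/-!
In any extrusion the vertices `x_1, …, x_n` form a maximal independent set of size `n`, while
an independent set meets each matching edge `x_i y_i` at most once. So if some maximal
independent set misses both `x_b` and `y_b`, it has fewer than `n` elements and purity fails.
Such a set exists whenever `x_a y_b` and `x_b y_c` are edges but `x_a y_c` is not: extend
`{x_a, y_c}` to a maximal independent set. Along an odd cycle the orientations of consecutive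
edges cannot alternate all the way round, so two consecutive edges of an odd hole are oriented
the same way, and since the hole is induced this gives such `a, b, c`.
-/

theorem ZMod.exists_apply_add_one_eq {k : ℕ} (f : ZMod (2 * k + 1) → Bool) :
    ∃ i, f (i + 1) = f i := by
  by_contra! hflip
  have hstep (i : ZMod (2 * k + 1)) : f (i + 1) = !f i := by
    simpa [Bool.eq_not_iff] using hflip i
  have heven (j : ℕ) : f (2 * j : ℕ) = f 0 := by
    induction j with
    | zero => simp
    | succ j ih =>
      rw [show ((2 * (j + 1) : ℕ) : ZMod (2 * k + 1)) = (2 * j : ℕ) + 1 + 1 by push_cast; ring,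
        hstep, hstep, ih, Bool.not_not]
  have hwrap : f ((2 * k : ℕ) + 1) = f 0 := by
    rw [← Nat.cast_succ, ZMod.natCast_self]
  rw [hstep, heven] at hwrap
  exact Bool.not_ne_self _ hwrap

theorem ZMod.add_natCast_ne_self {N k : ℕ} (hk : 0 < k) (hkN : k < N) (i : ZMod N) :
    i + k ≠ i := by
  rw [Ne, add_eq_left, ZMod.natCast_eq_zero_iff]
  exact fun hdvd => (Nat.le_of_dvd hk hdvd).not_gt hkN

section MatchedBipartite

variable {V : Type*} [Fintype V] {H : SimpleGraph (V ⊕ V)}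

theorem maximal_isIndep_univ_map_inl (hX : ∀ i j, ¬ H.Adj (.inl i) (.inl j))
    (hM : ∀ i, H.Adj (.inl i) (.inr i)) :
    Maximal (IsIndep H) (Finset.univ.map .inl) := by
  refine ⟨fun u hu v hv => ?_, fun t ht hsub => ?_⟩
  · simp only [Finset.mem_map, Finset.mem_univ, true_and, Function.Embedding.inl_apply] at hu hv
    obtain ⟨i, rfl⟩ := hu
    obtain ⟨j, rfl⟩ := hv
    exact hX i j
  · rintro (i | i) hi
    · simp
    · exact absurd (hM i) (ht _ (hsub (by simp)) _ hi)

theorem card_lt_of_isIndep (hM : ∀ i, H.Adj (.inl i) (.inr i)) {s : Finset (V ⊕ V)}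
    (hs : IsIndep H s) {b : V} (hbl : .inl b ∉ s) (hbr : .inr b ∉ s) :
    s.card < Fintype.card V := by
  classical
  have hmaps : Set.MapsTo (Sum.elim id id) s ((Finset.univ.erase b : Finset V) : Set V) := by
    rintro (i | i) hi
    · simpa using ne_of_mem_of_not_mem hi hbl
    · simpa using ne_of_mem_of_not_mem hi hbr
  have hinj : Set.InjOn (Sum.elim id id) (s : Set (V ⊕ V)) := by
    rintro (i | i) hi (j | j) hj (hij : i = j) <;> subst hij
    · rfl
    · exact absurd (hM i) (hs _ hi _ hj)
    · exact absurd (hM i).symm (hs _ hi _ hj)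
    · rfl
  calc s.card ≤ (Finset.univ.erase b).card := Finset.card_le_card_of_injOn _ hmaps hinj
    _ < Fintype.card V := Finset.card_erase_lt_of_mem (Finset.mem_univ b)

theorem exists_maximal_isIndep_card_ne_of_adj_of_adj (hX : ∀ i j, ¬ H.Adj (.inl i) (.inl j))
    (hM : ∀ i, H.Adj (.inl i) (.inr i)) {a b c : V} (hab : H.Adj (.inl a) (.inr b))
    (hbc : H.Adj (.inl b) (.inr c)) (hac : ¬ H.Adj (.inl a) (.inr c)) :
    ∃ s t, Maximal (IsIndep H) s ∧ Maximal (IsIndep H) t ∧ s.card ≠ t.card := by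
  classical
  have hac_indep : IsIndep H {.inl a, .inr c} := by
    simp only [IsIndep, Finset.mem_insert, Finset.mem_singleton]
    rintro u (rfl | rfl) v (rfl | rfl)
    exacts [H.irrefl, hac, fun h => hac h.symm, H.irrefl]
  obtain ⟨s, hsub, hs⟩ := Finite.exists_le_maximal hac_indep
  have hsa : .inl a ∈ s := hsub (by simp)
  have hsc : .inr c ∈ s := hsub (by simp)
  refine ⟨s, _, hs, maximal_isIndep_univ_map_inl hX hM, ?_⟩
  rw [Finset.card_map, Finset.card_univ]
  refine (card_lt_of_isIndep hM hs.prop (b := b) ?_ ?_).ne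
  · exact fun hb => hs.prop _ hb _ hsc hbc
  · exact fun hb => hs.prop _ hsa _ hb hab

end MatchedBipartite

theorem IsExtrusion.exists_maximal_isIndep_card_ne {n : ℕ} {G : SimpleGraph (Fin n)}
    {H : SimpleGraph (Fin n ⊕ Fin n)} (hH : IsExtrusion G H) {p q r : Fin n}
    (hpq : G.Adj p q) (hqr : G.Adj q r) (hpr : ¬ G.Adj p r) (hpr_ne : p ≠ r)
    (horient : H.Adj (.inl p) (.inr q) ↔ H.Adj (.inl q) (.inr r)) :
    ∃ s t, Maximal (IsIndep H) s ∧ Maximal (IsIndep H) t ∧ s.card ≠ t.card := by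
  obtain ⟨hX, -, hM, hedge, -⟩ := hH
  have hreverse {u v : Fin n} (huv : G.Adj u v) (h : ¬ H.Adj (.inl u) (.inr v)) :
      H.Adj (.inl v) (.inr u) :=
    ((hedge u v huv.ne).2 huv).resolve_left h
  have hnonedge {u v : Fin n} (hne : u ≠ v) (h : ¬ G.Adj u v) : ¬ H.Adj (.inl u) (.inr v) :=
    fun h' => h ((hedge u v hne).1 (.inl h'))
  by_cases hp : H.Adj (.inl p) (.inr q)
  · exact exists_maximal_isIndep_card_ne_of_adj_of_adj hX hM hp (horient.1 hp)
      (hnonedge hpr_ne hpr)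
  · exact exists_maximal_isIndep_card_ne_of_adj_of_adj hX hM (hreverse hqr (mt horient.2 hp))
      (hreverse hpq hp) (hnonedge hpr_ne.symm fun h => hpr h.symm)

/-- If a graph `G` contains an odd hole (an induced cycle of odd length `2m+1 ≥ 5`, given
by an injective map `c : ZMod (2m+1) → Fin n` whose image induces exactly the cycle
adjacencies), then no extrusion of `G` has a pure independence complex; in particular,
`G` is not Cohen-Macaulay extrudable. -/
theorem oddHole_not_extrudable {n : ℕ} (G : SimpleGraph (Fin n)) {m : ℕ} (hm : 2 ≤ m)
    (c : ZMod (2 * m + 1) → Fin n) (hcinj : Function.Injective c)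
    (hole : ∀ i j, G.Adj (c i) (c j) ↔ (j = i + 1 ∨ i = j + 1)) :
    ∀ H : SimpleGraph (Fin n ⊕ Fin n), IsExtrusion G H →
      ¬ (∀ s t : Finset (Fin n ⊕ Fin n), IsIndep H s → IsIndep H t →
          (∀ s', IsIndep H s' → s ⊆ s' → s = s') →
          (∀ t', IsIndep H t' → t ⊆ t' → t = t') → s.card = t.card) := by
  classical
  intro H hH hpure
  have hshift (k : ℕ) (hk : 0 < k ∧ k ≤ 3) (i : ZMod (2 * m + 1)) : i + k ≠ i :=
    ZMod.add_natCast_ne_self hk.1 (by omega) i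
  have hadj (j : ZMod (2 * m + 1)) : G.Adj (c j) (c (j + 1)) := (hole _ _).2 (.inl rfl)
  obtain ⟨i, hi⟩ :=
    ZMod.exists_apply_add_one_eq fun j => decide (H.Adj (.inl (c j)) (.inr (c (j + 1))))
  have hfar : ¬ G.Adj (c i) (c (i + 1 + 1)) := by
    rw [hole]
    rintro (h | h)
    · exact hshift 1 (by omega) (i + 1) (by simpa using h)
    · exact hshift 3 (by omega) i (by push_cast; linear_combination -h)
  have hfar_ne : c i ≠ c (i + 1 + 1) :=
    hcinj.ne fun h => hshift 2 (by omega) i (by push_cast; linear_combination -h)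
  obtain ⟨s, t, hs, ht, hcard⟩ := hH.exists_maximal_isIndep_card_ne (hadj i) (hadj (i + 1))
    hfar hfar_ne (decide_eq_decide.1 hi).symm
  exact hcard (hpure s t hs.prop ht.prop (fun _ h hle => hs.eq_of_le h hle)
    (fun _ h hle => ht.eq_of_le h hle))
end

section
/- For every finite simple graph G on n vertices there exists a finite simple graph H such that the independence complex Ind(H) is pure and vertex-decomposable, every maximal independent set of H has cardinality n, and for every j with 0 ≤ j ≤ n the number of independent sets of cardinality j in H equals Σ_{i=0}^{j} C(n−i, j−i) · f_{i−1}(G), where f_{i−1}(G) is the number of independent sets of cardinality i in G. That is, the face vector of every flag complex is the h-vector of some vertex-decomposable flag complex. (One may take H to be the full whiskering of G.) -/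
/-- A simplicial complex (given by its membership predicate on finsets) is pure:
all maximal faces have the same cardinality. -/
def IsPureCpx {α : Type*} (Δ : Finset α → Prop) : Prop :=
  ∀ s t : Finset α, Δ s → Δ t →
    (∀ s', Δ s' → s ⊆ s' → s = s') → (∀ t', Δ t' → t ⊆ t' → t = t') → s.card = t.card

/-- Vertex-decomposability of a simplicial complex: either it is a simplex, or it has a
shedding vertex `v` such that both the link and the deletion of `v` are pure and
vertex-decomposable. -/
inductive VertexDecomposable {α : Type*} [DecidableEq α] : (Finset α → Prop) → Prop
  | simplex {Δ : Finset α → Prop} (F : Finset α) (h : ∀ s, Δ s ↔ s ⊆ F) :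
      VertexDecomposable Δ
  | shed {Δ : Finset α → Prop} (v : α) (hv : Δ {v})
      (hlinkPure : IsPureCpx (fun s => v ∉ s ∧ Δ (insert v s)))
      (hdelPure : IsPureCpx (fun s => v ∉ s ∧ Δ s))
      (hlink : VertexDecomposable (fun s => v ∉ s ∧ Δ (insert v s)))
      (hdel : VertexDecomposable (fun s => v ∉ s ∧ Δ s)) :
      VertexDecomposable Δ

open Finset

lemma isPureCpx_of_maximal_card {α : Type*} {Δ : Finset α → Prop} (c : ℕ)
    (h : ∀ s, Δ s → (∀ s', Δ s' → s ⊆ s' → s = s') → #s = c) : IsPureCpx Δ :=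
  fun s t hs ht hms hmt => (h s hs hms).trans (h t ht hmt).symm

section IndepCpx

variable {α : Type*} (H : SimpleGraph α)

lemma isIndep_insert_s16 [DecidableEq α] {a : α} {s : Finset α} :
    IsIndep H (insert a s) ↔ IsIndep H s ∧ ∀ x ∈ s, ¬ H.Adj a x := by
  simp only [IsIndep, mem_insert, forall_eq_or_imp, H.irrefl, not_false_eq_true, true_and]
  exact ⟨fun h => ⟨fun u hu => (h.2 u hu).2, h.1⟩,
    fun h => ⟨h.2, fun u hu => ⟨fun hadj => h.2 u hu hadj.symm, h.1 u hu⟩⟩⟩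

def indepCpxOn (U : Finset α) (s : Finset α) : Prop :=
  s ⊆ U ∧ IsIndep H s

lemma indepCpxOn_univ [Fintype α] : indepCpxOn H univ = IsIndep H := by
  ext s
  simp [indepCpxOn]

open Classical in
noncomputable def sdiffClosedNbhd (U : Finset α) (v : α) : Finset α :=
  {u ∈ U | u ≠ v ∧ ¬ H.Adj v u}

@[simp] lemma mem_sdiffClosedNbhd {U : Finset α} {v u : α} :
    u ∈ sdiffClosedNbhd H U v ↔ u ∈ U ∧ u ≠ v ∧ ¬ H.Adj v u := by
  simp [sdiffClosedNbhd]

variable [DecidableEq α]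

lemma link_indepCpxOn {U : Finset α} {v : α} (hv : v ∈ U) :
    (fun s => v ∉ s ∧ indepCpxOn H U (insert v s)) = indepCpxOn H (sdiffClosedNbhd H U v) := by
  ext s
  simp only [indepCpxOn, isIndep_insert_s16, insert_subset_iff]
  simp only [subset_iff, mem_sdiffClosedNbhd]
  constructor
  · rintro ⟨hvs, ⟨-, hsU⟩, hs, hadj⟩
    exact ⟨fun u hu => ⟨hsU hu, by rintro rfl; exact hvs hu, hadj u hu⟩, hs⟩
  · rintro ⟨hsU, hs⟩
    exact ⟨fun hvs => (hsU hvs).2.1 rfl, ⟨hv, fun u hu => (hsU hu).1⟩, hs,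
      fun u hu => (hsU hu).2.2⟩

lemma del_indepCpxOn (U : Finset α) (v : α) :
    (fun s => v ∉ s ∧ indepCpxOn H U s) = indepCpxOn H (U.erase v) := by
  ext s
  simp only [indepCpxOn, subset_iff, mem_erase]
  exact ⟨fun ⟨hvs, hsU, hs⟩ =>
      ⟨fun u hu => ⟨by rintro rfl; exact hvs hu, hsU hu⟩, hs⟩,
    fun ⟨hsU, hs⟩ => ⟨fun hvs => (hsU hvs).1 rfl, fun u hu => (hsU hu).2, hs⟩⟩

lemma vertexDecomposable_indepCpxOn_of_isIndep {U : Finset α} (hU : IsIndep H U) :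
    VertexDecomposable (indepCpxOn H U) :=
  .simplex U fun _ =>
    ⟨And.left, fun hs => ⟨hs, fun u hu v hv => hU u (hs hu) v (hs hv)⟩⟩

lemma vertexDecomposable_indepCpxOn_of_shedding {U : Finset α} {v : α} (hv : v ∈ U)
    (hlinkPure : IsPureCpx (indepCpxOn H (sdiffClosedNbhd H U v)))
    (hdelPure : IsPureCpx (indepCpxOn H (U.erase v)))
    (hlink : VertexDecomposable (indepCpxOn H (sdiffClosedNbhd H U v)))
    (hdel : VertexDecomposable (indepCpxOn H (U.erase v))) :
    VertexDecomposable (indepCpxOn H U) := by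
  have hvU : indepCpxOn H U {v} :=
    ⟨singleton_subset_iff.2 hv, by simp [IsIndep]⟩
  rw [← link_indepCpxOn H hv] at hlinkPure hlink
  rw [← del_indepCpxOn H U v] at hdelPure hdel
  exact .shed v hvU hlinkPure hdelPure hlink hdel

end IndepCpx

section Whiskering

variable {V : Type*} (G : SimpleGraph V)

/-- The full whiskering of `G`: `inl v` is the vertex `v` of `G`, `inr v` its whisker `w_v`. -/
def fullWhiskering : SimpleGraph (V ⊕ V) where
  Adj
    | .inl a, .inl b => G.Adj a b
    | .inl a, .inr b => a = b
    | .inr a, .inl b => a = b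
    | .inr _, .inr _ => False
  symm := by
    constructor
    rintro (a | a) (b | b) h
    exacts [h.symm, h.symm, h.symm, h]
  loopless := by
    constructor
    rintro (a | a) h
    exacts [G.irrefl h, h]

@[simp] lemma fullWhiskering_adj_inl_inl {a b : V} :
    (fullWhiskering G).Adj (.inl a) (.inl b) ↔ G.Adj a b := Iff.rfl

@[simp] lemma fullWhiskering_adj_inl_inr {a b : V} :
    (fullWhiskering G).Adj (.inl a) (.inr b) ↔ a = b := Iff.rfl

@[simp] lemma fullWhiskering_adj_inr_inr {a b : V} :
    ¬ (fullWhiskering G).Adj (.inr a) (.inr b) := id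

lemma isIndep_fullWhiskering_iff {s : Finset (V ⊕ V)} :
    IsIndep (fullWhiskering G) s ↔ IsIndep G s.toLeft ∧ Disjoint s.toLeft s.toRight := by
  constructor
  · intro h
    exact ⟨fun a ha b hb => h _ (mem_toLeft.1 ha) _ (mem_toLeft.1 hb),
      disjoint_left.2 fun a ha hb => h _ (mem_toLeft.1 ha) _ (mem_toRight.1 hb) rfl⟩
  · rintro ⟨hA, hAB⟩ (a | a) ha (b | b) hb hadj
    · exact hA a (mem_toLeft.2 ha) b (mem_toLeft.2 hb) hadj
    · obtain rfl : a = b := hadj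
      exact disjoint_left.1 hAB (mem_toLeft.2 ha) (mem_toRight.2 hb)
    · obtain rfl : a = b := hadj
      exact disjoint_left.1 hAB (mem_toLeft.2 hb) (mem_toRight.2 ha)
    · exact hadj

variable [DecidableEq V]

lemma sdiffClosedNbhd_fullWhiskering_inl (S T : Finset V) (v : V) :
    sdiffClosedNbhd (fullWhiskering G) (S.disjSum T) (.inl v) =
      (sdiffClosedNbhd G S v).disjSum (T.erase v) := by
  ext (u | u) <;> simp [eq_comm, and_comm]

lemma erase_inl_disjSum (S T : Finset V) (v : V) :
    (S.disjSum T).erase (.inl v) = (S.erase v).disjSum T := by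
  ext (u | u) <;> simp

/-- Every maximal face has one vertex out of each pair `{inl u, inr u}`, `u ∈ T`. -/
lemma card_of_maximal_indepCpxOn_fullWhiskering {S T : Finset V} (hST : S ⊆ T)
    {s : Finset (V ⊕ V)} (hs : indepCpxOn (fullWhiskering G) (S.disjSum T) s)
    (hmax : ∀ s', indepCpxOn (fullWhiskering G) (S.disjSum T) s' → s ⊆ s' → s = s') :
    #s = #T := by
  obtain ⟨hsU, hind⟩ := hs
  have hdisj := ((isIndep_fullWhiskering_iff G).1 hind).2
  rw [subset_disjSum] at hsU
  have hright : s.toRight = T \ s.toLeft := by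
    refine Subset.antisymm (subset_sdiff.2 ⟨hsU.2, hdisj.symm⟩) fun u hu => ?_
    obtain ⟨huT, huA⟩ := mem_sdiff.1 hu
    have hins : indepCpxOn (fullWhiskering G) (S.disjSum T) (insert (.inr u) s) := by
      refine ⟨insert_subset (inr_mem_disjSum.2 huT) (subset_disjSum.2 hsU), ?_⟩
      refine (isIndep_insert_s16 _).2 ⟨hind, ?_⟩
      rintro (x | x) hx
      · rintro rfl; exact huA (mem_toLeft.2 hx)
      · exact fullWhiskering_adj_inr_inr G
    rw [hmax _ hins (subset_insert _ _)]
    simp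
  rw [← card_toLeft_add_card_toRight, hright, card_sdiff_of_subset (hsU.1.trans hST)]
  have := card_le_card (hsU.1.trans hST)
  omega

lemma isPureCpx_indepCpxOn_fullWhiskering {S T : Finset V} (hST : S ⊆ T) :
    IsPureCpx (indepCpxOn (fullWhiskering G) (S.disjSum T)) :=
  isPureCpx_of_maximal_card #T fun _ hs hmax =>
    card_of_maximal_indepCpxOn_fullWhiskering G hST hs hmax

lemma vertexDecomposable_indepCpxOn_fullWhiskering (S T : Finset V) (hST : S ⊆ T) :
    VertexDecomposable (indepCpxOn (fullWhiskering G) (S.disjSum T)) := by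
  induction S using Finset.strongInduction generalizing T with
  | H S ih =>
    rcases S.eq_empty_or_nonempty with rfl | ⟨v, hv⟩
    · refine vertexDecomposable_indepCpxOn_of_isIndep _ ((isIndep_fullWhiskering_iff G).2 ?_)
      simp [IsIndep, disjoint_left]
    have hlinkS : sdiffClosedNbhd G S v ⊂ S :=
      ⟨fun u hu => ((mem_sdiffClosedNbhd G).1 hu).1,
        fun h => ((mem_sdiffClosedNbhd G).1 (h hv)).2.1 rfl⟩
    have hlinkT : sdiffClosedNbhd G S v ⊆ T.erase v := fun u hu => by
      obtain ⟨huS, huv, -⟩ := (mem_sdiffClosedNbhd G).1 hu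
      exact mem_erase.2 ⟨huv, hST huS⟩
    have hdelT : S.erase v ⊆ T := (erase_subset v S).trans hST
    refine vertexDecomposable_indepCpxOn_of_shedding _ (inl_mem_disjSum.2 hv) ?_ ?_ ?_ ?_ <;>
      simp only [sdiffClosedNbhd_fullWhiskering_inl, erase_inl_disjSum]
    · exact isPureCpx_indepCpxOn_fullWhiskering G hlinkT
    · exact isPureCpx_indepCpxOn_fullWhiskering G hdelT
    · exact ih _ hlinkS _ hlinkT
    · exact ih _ (erase_ssubset hv) _ hdelT

end Whiskering

section Counting

variable {α : Type*} [Fintype α]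

open Classical in
noncomputable def indepFinset (H : SimpleGraph α) (k : ℕ) : Finset (Finset α) :=
  {s | IsIndep H s ∧ #s = k}

@[simp] lemma mem_indepFinset {H : SimpleGraph α} {k : ℕ} {s : Finset α} :
    s ∈ indepFinset H k ↔ IsIndep H s ∧ #s = k := by
  simp [indepFinset]

lemma indepCount_eq_card_indepFinset (H : SimpleGraph α) (k : ℕ) :
    indepCount H k = #(indepFinset H k) := by
  rw [indepCount, ← Set.ncard_coe_finset]
  congr
  ext s
  simp

lemma pairwise_disjoint_indepFinset (H : SimpleGraph α) :
    Pairwise fun i k => Disjoint (indepFinset H i) (indepFinset H k) :=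
  fun _ _ hne => disjoint_left.2 fun _ hs ht =>
    hne ((mem_indepFinset.1 hs).2.symm.trans (mem_indepFinset.1 ht).2)

variable {V : Type*} [Fintype V] [DecidableEq V] (G : SimpleGraph V)

lemma card_filter_toLeft_indepFinset_fullWhiskering {A : Finset V} (hA : IsIndep G A) {j : ℕ}
    (hAj : #A ≤ j) :
    #{s ∈ indepFinset (fullWhiskering G) j | s.toLeft = A} =
      (Fintype.card V - #A).choose (j - #A) := by
  rw [← card_compl, ← card_powersetCard]
  refine card_nbij' toRight A.disjSum ?_ ?_ ?_ ?_
  · intro s hs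
    simp only [coe_filter, mem_indepFinset, isIndep_fullWhiskering_iff, Set.mem_ofPred_eq] at hs
    obtain ⟨⟨⟨-, hdisj⟩, hcard⟩, rfl⟩ := hs
    rw [mem_coe, mem_powersetCard, subset_compl_iff_disjoint_left, ← hcard,
      ← card_toLeft_add_card_toRight]
    exact ⟨hdisj, by omega⟩
  · intro B hB
    rw [mem_coe, mem_powersetCard, subset_compl_iff_disjoint_left] at hB
    simp only [coe_filter, mem_indepFinset, isIndep_fullWhiskering_iff, Set.mem_ofPred_eq,
      toLeft_disjSum, toRight_disjSum, card_disjSum, and_true]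
    exact ⟨⟨hA, hB.1⟩, by omega⟩
  · intro s hs
    simp only [coe_filter, Set.mem_ofPred_eq] at hs
    rw [← hs.2, toLeft_disjSum_toRight]
  · intro B _
    exact toRight_disjSum

theorem indepCount_fullWhiskering (j : ℕ) :
    indepCount (fullWhiskering G) j =
      ∑ i ∈ range (j + 1), (Fintype.card V - i).choose (j - i) * indepCount G i := by
  have hmaps : ∀ s ∈ indepFinset (fullWhiskering G) j,
      s.toLeft ∈ (range (j + 1)).biUnion (indepFinset G) := fun s hs => by
    rw [mem_indepFinset, isIndep_fullWhiskering_iff] at hs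
    have hcard : #s.toLeft < j + 1 := Nat.lt_succ_of_le (hs.2 ▸ card_toLeft_le)
    exact mem_biUnion.2 ⟨_, mem_range.2 hcard, mem_indepFinset.2 ⟨hs.1.1, rfl⟩⟩
  calc indepCount (fullWhiskering G) j
      = ∑ A ∈ (range (j + 1)).biUnion (indepFinset G),
          #{s ∈ indepFinset (fullWhiskering G) j | s.toLeft = A} := by
        rw [indepCount_eq_card_indepFinset, card_eq_sum_card_fiberwise hmaps]
    _ = ∑ i ∈ range (j + 1), ∑ A ∈ indepFinset G i,
          #{s ∈ indepFinset (fullWhiskering G) j | s.toLeft = A} :=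
        sum_biUnion ((pairwise_disjoint_indepFinset G).set_pairwise _)
    _ = ∑ i ∈ range (j + 1), ∑ _A ∈ indepFinset G i,
          (Fintype.card V - i).choose (j - i) := by
        refine sum_congr rfl fun i hi => sum_congr rfl fun A hAi => ?_
        obtain ⟨hA, rfl⟩ := mem_indepFinset.1 hAi
        exact card_filter_toLeft_indepFinset_fullWhiskering G hA
          (Nat.le_of_lt_succ (mem_range.1 hi))
    _ = _ := by
        simp only [sum_const, smul_eq_mul, indepCount_eq_card_indepFinset, mul_comm]

end Counting

theorem flag_f_is_vd_flag_h_general {V : Type} [Fintype V] (G : SimpleGraph V) :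
    ∃ (W : Type) (_ : Fintype W) (_ : DecidableEq W) (H : SimpleGraph W),
      IsPureCpx (fun s : Finset W => IsIndep H s) ∧
      VertexDecomposable (fun s : Finset W => IsIndep H s) ∧
      (∀ s : Finset W, IsIndep H s →
        (∀ s', IsIndep H s' → s ⊆ s' → s = s') → s.card = Fintype.card V) ∧
      (∀ j ≤ Fintype.card V,
        indepCount H j =
          ∑ i ∈ Finset.range (j + 1),
            (Fintype.card V - i).choose (j - i) * indepCount G i) := by
  classical
  have hcpx : indepCpxOn (fullWhiskering G) ((univ : Finset V).disjSum univ) =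
      IsIndep (fullWhiskering G) := by
    rw [univ_disjSum_univ, indepCpxOn_univ]
  refine ⟨V ⊕ V, inferInstance, inferInstance, fullWhiskering G, ?_, ?_, ?_,
    fun j _ => indepCount_fullWhiskering G j⟩
  · exact hcpx ▸ isPureCpx_indepCpxOn_fullWhiskering G subset_rfl
  · exact hcpx ▸ vertexDecomposable_indepCpxOn_fullWhiskering G univ univ subset_rfl
  · intro s hs hmax
    rw [← hcpx] at hs hmax
    exact card_of_maximal_indepCpxOn_fullWhiskering G subset_rfl hs hmax

/-- The face vector of every flag complex is the `h`-vector of some vertex-decomposable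
flag complex: for every graph `G` on `n` vertices there is a graph `H` whose independence
complex is pure and vertex-decomposable, all of whose maximal independent sets have
cardinality `n`, and such that for `0 ≤ j ≤ n` the number of independent sets of
cardinality `j` in `H` equals `∑_{i=0}^{j} C(n-i, j-i) · f_{i-1}(G)`. -/
theorem flag_f_is_vd_flag_h {V : Type} [Fintype V] [DecidableEq V] (G : SimpleGraph V) :
    ∃ (W : Type) (_ : Fintype W) (_ : DecidableEq W) (H : SimpleGraph W),
      IsPureCpx (fun s : Finset W => IsIndep H s) ∧
      VertexDecomposable (fun s : Finset W => IsIndep H s) ∧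
      (∀ s : Finset W, IsIndep H s →
        (∀ s', IsIndep H s' → s ⊆ s' → s = s') → s.card = Fintype.card V) ∧
      (∀ j ≤ Fintype.card V,
        indepCount H j =
          ∑ i ∈ Finset.range (j + 1),
            (Fintype.card V - i).choose (j - i) * indepCount G i) :=
  flag_f_is_vd_flag_h_general G
end
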